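/- If S ∈ SP₂ₙ(ℂ) is purely imaginary (S = iQ with Q real), then for every Z in the Siegel upper half space, Φ_S(Z) is well defined and lies in 𝒮̄ₙ (complex symmetric matrices with negative definite imaginary part). -/

import Mathlib

open Matrix

noncomputable section

/-- The standard symplectic form matrix over ℂ. -/
def J (n : ℕ) : Matrix (Fin n ⊕ Fin n) (Fin n ⊕ Fin n) ℂ :=
  Matrix.fromBlocks 0 1 (-1) 0

/-- The standard symplectic form matrix over ℝ. -/
def JR (n : ℕ) : Matrix (Fin n ⊕ Fin n) (Fin n ⊕ Fin n) ℝ :=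
  Matrix.fromBlocks 0 1 (-1) 0

/-- Membership in the Siegel upper half space: symmetric with positive definite
imaginary part. -/
def InSiegel {n : ℕ} (Z : Matrix (Fin n) (Fin n) ℂ) : Prop :=
  Zᵀ = Z ∧ (Z.map Complex.im).PosDef

/-- Membership in the lower Siegel space: symmetric with negative definite
imaginary part. -/
def InSiegelBar {n : ℕ} (Z : Matrix (Fin n) (Fin n) ℂ) : Prop :=
  Zᵀ = Z ∧ (-(Z.map Complex.im)).PosDef

/-- The generalized linear fractional transformation Φ. -/
def Phi {n : ℕ} (A B C D Z : Matrix (Fin n) (Fin n) ℂ) : Matrix (Fin n) (Fin n) ℂ :=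
  (A * Z + B) * (C * Z + D)⁻¹

/-- The ℓ²-operator norm of a complex matrix. -/
def opNorm {n : ℕ} (M : Matrix (Fin n) (Fin n) ℂ) : ℝ :=
  ‖Matrix.toEuclideanCLM (𝕜 := ℂ) (n := Fin n) M‖

/-! Write `V = AZ + B` and `W = CZ + D`, so that `S [Z; 1] = [V; W]`. Evaluating the form
`Xᵀ J X` on `[Z; 1]` and using `Sᵀ J S = J` gives `VᵀW = WᵀV`, which makes `V W⁻¹` symmetric.
Because `S = iQ` with `Q` real, `Sᴴ = -Sᵀ`, so evaluating the sesquilinear form `Xᴴ J X` instead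
flips its sign: `VᴴW - WᴴV = Z - Zᴴ = 2i Im Z`. Since `Im Z` is positive definite, `W` has trivial
kernel, and `V W⁻¹ - (V W⁻¹)ᴴ = -(W⁻¹)ᴴ (2i Im Z) W⁻¹` shows that `Im (V W⁻¹)` is negative
definite. -/

open scoped ComplexOrder

namespace Matrix

variable {m : Type*}

lemma sub_conjTranspose_eq_of_transpose_eq {Z : Matrix m m ℂ} (hZ : Zᵀ = Z) :
    Z - Zᴴ = (2 * Complex.I) • (Z.map Complex.im).map ((↑) : ℝ → ℂ) := by
  ext i j
  have hji : Z j i = Z i j := by rw [← transpose_apply Z i j, hZ]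
  simp only [sub_apply, conjTranspose_apply, RCLike.star_def, hji, smul_apply, map_apply,
    smul_eq_mul, Complex.sub_conj]
  push_cast
  ring

lemma conjTranspose_eq_neg_transpose_of_eq_I_smul {k : Type*} {Q : Matrix m k ℝ}
    {S : Matrix m k ℂ} (hSQ : S = Complex.I • Q.map ((↑) : ℝ → ℂ)) : Sᴴ = -Sᵀ := by
  subst hSQ
  ext i j
  simp

variable [Fintype m]

lemma re_star_dotProduct_map_ofReal_mulVec (M : Matrix m m ℝ) (v : m → ℂ) :
    (star v ⬝ᵥ M.map ((↑) : ℝ → ℂ) *ᵥ v).re =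
      (fun i ↦ (v i).re) ⬝ᵥ M *ᵥ (fun i ↦ (v i).re) +
        (fun i ↦ (v i).im) ⬝ᵥ M *ᵥ (fun i ↦ (v i).im) := by
  simp only [dotProduct, mulVec, map_apply, Pi.star_apply, RCLike.star_def, Complex.re_sum,
    Finset.mul_sum, ← Finset.sum_add_distrib]
  refine Finset.sum_congr rfl fun i _ ↦ Finset.sum_congr rfl fun j _ ↦ ?_
  simp only [Complex.mul_re, Complex.mul_im, Complex.conj_re, Complex.conj_im,
    Complex.ofReal_re, Complex.ofReal_im]
  ring

theorem posDef_map_ofReal_iff {M : Matrix m m ℝ} :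
    (M.map ((↑) : ℝ → ℂ)).PosDef ↔ M.PosDef := by
  have hherm : (M.map ((↑) : ℝ → ℂ)).IsHermitian ↔ M.IsHermitian := by
    rw [IsHermitian, ← conjTranspose_map _ fun x ↦ (Complex.conj_ofReal x).symm,
      (map_injective Complex.ofReal_injective).eq_iff, IsHermitian]
  refine ⟨fun h ↦ .of_dotProduct_mulVec_pos (hherm.1 h.1) fun x hx ↦ ?_,
    fun h ↦ .of_dotProduct_mulVec_pos (hherm.2 h.1) fun v hv ↦ ?_⟩
  · have hx' : (fun i ↦ (x i : ℂ)) ≠ 0 := fun h0 ↦ hx (funext fun i ↦ by simpa using congrFun h0 i)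
    simpa [re_star_dotProduct_map_ofReal_mulVec] using h.re_dotProduct_pos hx'
  · refine RCLike.pos_iff.2 ⟨?_, (hherm.2 h.1).im_star_dotProduct_mulVec_self v⟩
    have hre := h.posSemidef.dotProduct_mulVec_nonneg (fun i ↦ (v i).re)
    have him := h.posSemidef.dotProduct_mulVec_nonneg (fun i ↦ (v i).im)
    simp only [star_trivial] at hre him
    simp only [RCLike.re_to_complex, re_star_dotProduct_map_ofReal_mulVec]
    by_cases h0 : (fun i ↦ (v i).re) = 0
    · have h1 : (fun i ↦ (v i).im) ≠ 0 := fun h1 ↦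
        hv (funext fun i ↦ Complex.ext (congrFun h0 i) (congrFun h1 i))
      simpa using add_pos_of_nonneg_of_pos hre (h.dotProduct_mulVec_pos h1)
    · simpa using add_pos_of_pos_of_nonneg (h.dotProduct_mulVec_pos h0) him

variable [DecidableEq m]

section CommRing

variable {R : Type*} [CommRing R]

lemma transpose_mul_inv_eq_of_transpose_mul_comm {V W : Matrix m m R} (hW : IsUnit W)
    (h : Vᵀ * W = Wᵀ * V) : (V * W⁻¹)ᵀ = V * W⁻¹ := by
  have hWt : IsUnit Wᵀ.det := by rwa [det_transpose, ← isUnit_iff_isUnit_det]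
  rw [isUnit_iff_isUnit_det] at hW
  calc (V * W⁻¹)ᵀ = Wᵀ⁻¹ * (Vᵀ * W) * W⁻¹ := by
        rw [transpose_mul, transpose_nonsing_inv, Matrix.mul_assoc, Matrix.mul_assoc,
          mul_nonsing_inv _ hW, Matrix.mul_one]
    _ = V * W⁻¹ := by rw [h, ← Matrix.mul_assoc, nonsing_inv_mul _ hWt, Matrix.one_mul]

lemma mul_inv_sub_conjTranspose [StarRing R] {V W : Matrix m m R} (hW : IsUnit W) :
    V * W⁻¹ - (V * W⁻¹)ᴴ = (W⁻¹)ᴴ * (Wᴴ * V - Vᴴ * W) * W⁻¹ := by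
  rw [isUnit_iff_isUnit_det] at hW
  have hWW : (W⁻¹)ᴴ * Wᴴ = 1 := by rw [← conjTranspose_mul, mul_nonsing_inv _ hW, conjTranspose_one]
  rw [Matrix.mul_sub, Matrix.sub_mul, ← Matrix.mul_assoc, hWW, Matrix.one_mul, Matrix.mul_assoc,
    Matrix.mul_assoc, mul_nonsing_inv _ hW, Matrix.mul_one, conjTranspose_mul]

end CommRing

lemma isUnit_of_conjTranspose_mul_sub_eq_smul_posDef {V W P : Matrix m m ℂ} {c : ℂ} (hc : c ≠ 0)
    (hP : P.PosDef) (h : Vᴴ * W - Wᴴ * V = c • P) : IsUnit W := by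
  rw [isUnit_iff_isUnit_det, isUnit_iff_ne_zero]
  intro hdet
  obtain ⟨v, hv0, hv⟩ := exists_mulVec_eq_zero_iff.mpr hdet
  have h0 : star v ⬝ᵥ (Vᴴ * W - Wᴴ * V) *ᵥ v = 0 := by
    rw [sub_mulVec, dotProduct_sub, ← mulVec_mulVec, ← mulVec_mulVec, hv, mulVec_zero,
      dotProduct_zero, dotProduct_mulVec, ← star_mulVec, hv, star_zero, zero_dotProduct, sub_zero]
  rw [h, smul_mulVec, dotProduct_smul, smul_eq_mul] at h0
  exact (hP.dotProduct_mulVec_pos hv0).ne' ((mul_eq_zero.1 h0).resolve_left hc)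

theorem posDef_neg_map_im_mul_inv {V W : Matrix m m ℂ} {Y : Matrix m m ℝ} (hY : Y.PosDef)
    (hW : IsUnit W) (hsymm : Vᵀ * W = Wᵀ * V)
    (hherm : Vᴴ * W - Wᴴ * V = (2 * Complex.I) • Y.map ((↑) : ℝ → ℂ)) :
    (-((V * W⁻¹).map Complex.im)).PosDef := by
  have hΦ := sub_conjTranspose_eq_of_transpose_eq
    (transpose_mul_inv_eq_of_transpose_mul_comm hW hsymm)
  rw [mul_inv_sub_conjTranspose hW, ← neg_sub, hherm, Matrix.mul_neg, Matrix.neg_mul,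
    Matrix.mul_smul, Matrix.smul_mul, ← smul_neg] at hΦ
  have hIm : (-((V * W⁻¹).map Complex.im)).map ((↑) : ℝ → ℂ) =
      star W⁻¹ * Y.map ((↑) : ℝ → ℂ) * W⁻¹ := by
    have h2I : (2 * Complex.I) ≠ 0 := by simp
    rw [star_eq_conjTranspose, ← neg_neg (_ * _ * _), smul_right_injective _ h2I hΦ]
    ext i j
    simp
  rw [← posDef_map_ofReal_iff, hIm]
  exact (isUnit_nonsing_inv_iff.2 hW).posDef_star_left_conjugate_iff.2 (posDef_map_ofReal_iff.2 hY)

lemma mul_fromRows_one {R : Type*} [Semiring R] (S : Matrix (m ⊕ m) (m ⊕ m) R)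
    (Z : Matrix m m R) :
    S * fromRows Z (1 : Matrix m m R) =
      fromRows (S.toBlocks₁₁ * Z + S.toBlocks₁₂) (S.toBlocks₂₁ * Z + S.toBlocks₂₂) := by
  conv_lhs => rw [← fromBlocks_toBlocks S]
  rw [fromBlocks_mul_fromRows, Matrix.mul_one, Matrix.mul_one]

end Matrix

section Symplectic

variable {n : ℕ} {k : Type*}

lemma fromCols_mul_J_mul_fromRows {m : Type*} (P₁ P₂ : Matrix m (Fin n) ℂ)
    (V W : Matrix (Fin n) k ℂ) : fromCols P₁ P₂ * J n * fromRows V W = P₁ * W - P₂ * V := by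
  rw [_root_.J, fromCols_mul_fromBlocks, fromCols_mul_fromRows]
  simp only [Matrix.mul_zero, Matrix.mul_one, Matrix.mul_neg, Matrix.neg_mul, zero_add, add_zero]
  abel

lemma transpose_fromRows_mul_J_mul_fromRows (V₁ W₁ V₂ W₂ : Matrix (Fin n) k ℂ) :
    (fromRows V₁ W₁)ᵀ * J n * fromRows V₂ W₂ = V₁ᵀ * W₂ - W₁ᵀ * V₂ := by
  rw [transpose_fromRows, fromCols_mul_J_mul_fromRows]

lemma conjTranspose_fromRows_mul_J_mul_fromRows (V₁ W₁ V₂ W₂ : Matrix (Fin n) k ℂ) :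
    (fromRows V₁ W₁)ᴴ * J n * fromRows V₂ W₂ = V₁ᴴ * W₂ - W₁ᴴ * V₂ := by
  rw [conjTranspose_fromRows_eq_fromCols_conjTranspose, fromCols_mul_J_mul_fromRows]

variable {S : Matrix (Fin n ⊕ Fin n) (Fin n ⊕ Fin n) ℂ}

lemma transpose_mul_J_mul_of_symplectic (hS : Sᵀ * J n * S = J n)
    (X Y : Matrix (Fin n ⊕ Fin n) k ℂ) : (S * X)ᵀ * J n * (S * Y) = Xᵀ * J n * Y := by
  calc (S * X)ᵀ * J n * (S * Y) = Xᵀ * (Sᵀ * J n * S) * Y := by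
        simp only [transpose_mul, Matrix.mul_assoc]
    _ = Xᵀ * J n * Y := by rw [hS]

lemma conjTranspose_mul_J_mul_of_symplectic (hS : Sᵀ * J n * S = J n) (hSH : Sᴴ = -Sᵀ)
    (X Y : Matrix (Fin n ⊕ Fin n) k ℂ) : (S * X)ᴴ * J n * (S * Y) = -(Xᴴ * J n * Y) := by
  calc (S * X)ᴴ * J n * (S * Y) = -(Xᴴ * (Sᵀ * J n * S) * Y) := by
        simp only [conjTranspose_mul, hSH, Matrix.mul_assoc, Matrix.mul_neg, Matrix.neg_mul]
    _ = -(Xᴴ * J n * Y) := by rw [hS]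

end Symplectic

theorem stmt5 (n : ℕ) (Q : Matrix (Fin n ⊕ Fin n) (Fin n ⊕ Fin n) ℝ)
    (S : Matrix (Fin n ⊕ Fin n) (Fin n ⊕ Fin n) ℂ)
    (hSQ : S = Complex.I • Q.map Complex.ofReal)
    (hS : Sᵀ * J n * S = J n)
    (Z : Matrix (Fin n) (Fin n) ℂ) (hZ : InSiegel Z) :
    IsUnit (S.toBlocks₂₁ * Z + S.toBlocks₂₂) ∧
      InSiegelBar (Phi S.toBlocks₁₁ S.toBlocks₁₂ S.toBlocks₂₁ S.toBlocks₂₂ Z) := by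
  obtain ⟨hZsymm, hY⟩ := hZ
  set V := S.toBlocks₁₁ * Z + S.toBlocks₁₂
  set W := S.toBlocks₂₁ * Z + S.toBlocks₂₂
  have hgraph : S * fromRows Z (1 : Matrix (Fin n) (Fin n) ℂ) = fromRows V W := mul_fromRows_one S Z
  have hsymm : Vᵀ * W = Wᵀ * V := by
    have h := transpose_mul_J_mul_of_symplectic hS (fromRows Z 1) (fromRows Z 1)
    rwa [hgraph, transpose_fromRows_mul_J_mul_fromRows, transpose_fromRows_mul_J_mul_fromRows,
      hZsymm, transpose_one, Matrix.mul_one, Matrix.one_mul, sub_self, sub_eq_zero] at h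
  have hherm : Vᴴ * W - Wᴴ * V = (2 * Complex.I) • (Z.map Complex.im).map ((↑) : ℝ → ℂ) := by
    have h := conjTranspose_mul_J_mul_of_symplectic hS
      (conjTranspose_eq_neg_transpose_of_eq_I_smul hSQ) (fromRows Z 1) (fromRows Z 1)
    rw [hgraph, conjTranspose_fromRows_mul_J_mul_fromRows,
      conjTranspose_fromRows_mul_J_mul_fromRows, conjTranspose_one, Matrix.mul_one,
      Matrix.one_mul, neg_sub] at h
    rw [h, sub_conjTranspose_eq_of_transpose_eq hZsymm]
  have hW : IsUnit W := isUnit_of_conjTranspose_mul_sub_eq_smul_posDef (by simp)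
    (posDef_map_ofReal_iff.2 hY) hherm
  exact ⟨hW, transpose_mul_inv_eq_of_transpose_mul_comm hW hsymm,
    posDef_neg_map_im_mul_inv hY hW hsymm hherm⟩
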